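/- Let M be a model based on a 2-frame (W,R0,R1), let R0 be transitive, and suppose M,r ⊨ (t ∨ ◇1t → t ∧ □1t) ∧ □0(t ∨ ◇1t → t ∧ □1t) for a point r. Then: (i) if (lcom) holds in the frame, then for all y,z: r R̄0^M y R1 z implies there is u with r R1 u R̄0^M z; (ii) if (rcom) holds, then for all x,y,z: (x = r or rR0x) and x R1 y R̄0^M z imply there is u with x R̄0^M u R1 z; (iii) if (conf) holds, then for all x,y,z: rR0x, x R̄0^M z and xR1y imply there is u with y R̄0^M u and z R1 u. -/

import Mathlib

set_option linter.unusedVariables false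

/-! ### Unimodal syntax -/

/-- Unimodal formulas: propositional variables, falsum, implication and one box.
Other Booleans and the diamond are defined from these. -/
inductive UForm : Type
  | var : ℕ → UForm
  | bot : UForm
  | imp : UForm → UForm → UForm
  | box : UForm → UForm

namespace UForm
def neg (φ : UForm) : UForm := imp φ bot
def dia (φ : UForm) : UForm := neg (box (neg φ))
end UForm

/-! ### Bimodal syntax -/

/-- Bimodal formulas: propositional variables, falsum, implication and boxes `□0`, `□1`. -/
inductive BForm : Type
  | var : ℕ → BForm
  | bot : BForm
  | imp : BForm → BForm → BForm
  | box : Fin 2 → BForm → BForm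

namespace BForm
def neg (φ : BForm) : BForm := imp φ bot
def top : BForm := neg bot
def and (φ ψ : BForm) : BForm := neg (imp φ (neg ψ))
def or (φ ψ : BForm) : BForm := imp (neg φ) ψ
def dia (i : Fin 2) (φ : BForm) : BForm := neg (box i (neg φ))

/-- Substitution of formulas for propositional variables. -/
def subst (s : ℕ → BForm) : BForm → BForm
  | var n => s n
  | bot => bot
  | imp φ ψ => imp (subst s φ) (subst s ψ)
  | box i φ => box i (subst s φ)
end BForm

/-- Embedding of unimodal formulas into bimodal ones, reading the unimodal box as `□i`. -/
def UForm.embed (i : Fin 2) : UForm → BForm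
  | var n => .var n
  | bot => .bot
  | imp φ ψ => .imp (embed i φ) (embed i ψ)
  | box φ => .box i (embed i φ)

/-! ### Frames and semantics -/

/-- A unimodal Kripke frame: a nonempty set with a binary relation. -/
structure Frame1 : Type 1 where
  W : Type
  ne : Nonempty W
  R : W → W → Prop

/-- Truth of a unimodal formula at a point of a model based on a unimodal frame. -/
def UTruth (F : Frame1) (V : ℕ → F.W → Prop) : F.W → UForm → Prop
  | w, .var n => V n w
  | _, .bot => False
  | w, .imp φ ψ => UTruth F V w φ → UTruth F V w ψ
  | w, .box φ => ∀ v, F.R w v → UTruth F V v φ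

/-- Validity of a unimodal formula in a unimodal frame. -/
def UValid (F : Frame1) (φ : UForm) : Prop := ∀ V w, UTruth F V w φ

/-- `F` is a frame for the set `L` of unimodal formulas. -/
def UFrameFor (F : Frame1) (L : Set UForm) : Prop := ∀ φ ∈ L, UValid F φ

/-- The unimodal logic determined by a class of unimodal frames. -/
def ULog (C : Set Frame1) : Set UForm := { φ | ∀ F ∈ C, UValid F φ }

/-- The unimodal logic of a single unimodal frame. -/
def LogOf (F : Frame1) : Set UForm := { φ | UValid F φ }

/-- A 2-frame: a nonempty set with two binary relations `R 0` and `R 1`. -/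
structure Frame2 : Type 1 where
  W : Type
  ne : Nonempty W
  R : Fin 2 → W → W → Prop

/-- Truth of a bimodal formula at a point of a model based on a 2-frame. -/
def BTruth (F : Frame2) (V : ℕ → F.W → Prop) : F.W → BForm → Prop
  | w, .var n => V n w
  | _, .bot => False
  | w, .imp φ ψ => BTruth F V w φ → BTruth F V w ψ
  | w, .box i φ => ∀ v, F.R i w v → BTruth F V v φ

/-- Validity of a bimodal formula in a 2-frame. -/
def BValid (F : Frame2) (φ : BForm) : Prop := ∀ V w, BTruth F V w φ

/-- `F` is a frame for the set `L` of bimodal formulas. -/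
def FrameFor (F : Frame2) (L : Set BForm) : Prop := ∀ φ ∈ L, BValid F φ

/-! ### Normal bimodal logics -/

/-- `φ` is a propositional tautology: it is true under every assignment of truth values
to formulas that respects `⊥` and `→` (so variables and boxed formulas act as atoms). -/
def BTaut (φ : BForm) : Prop :=
  ∀ v : BForm → Prop, (¬ v .bot) → (∀ a b, v (.imp a b) ↔ (v a → v b)) → v φ

/-- A normal bimodal logic: contains all propositional tautologies and the K-axioms for
both boxes, and is closed under modus ponens, substitution and necessitation. -/
structure IsLogic (L : Set BForm) : Prop where
  taut : ∀ φ, BTaut φ → φ ∈ L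
  kax : ∀ (i : Fin 2) (φ ψ : BForm),
    BForm.imp (.box i (.imp φ ψ)) (.imp (.box i φ) (.box i ψ)) ∈ L
  mp : ∀ φ ψ, BForm.imp φ ψ ∈ L → φ ∈ L → ψ ∈ L
  subst : ∀ φ s, φ ∈ L → BForm.subst s φ ∈ L
  nec : ∀ (i : Fin 2) (φ : BForm), φ ∈ L → BForm.box i φ ∈ L

/-- The smallest normal bimodal logic containing a given set of bimodal formulas. -/
def SmallestLogic (S : Set BForm) : Set BForm := ⋂₀ { L : Set BForm | IsLogic L ∧ S ⊆ L }

/-- The fusion `L0 ⊕ L1`: the smallest normal bimodal logic containing `L0` (in `□0`)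
and `L1` (in `□1`). -/
def Fusion (L0 L1 : Set UForm) : Set BForm :=
  SmallestLogic ((UForm.embed 0 '' L0) ∪ (UForm.embed 1 '' L1))

/-- Left commutativity axiom `□1□0 p → □0□1 p`. -/
def lcomAx : BForm := .imp (.box 1 (.box 0 (.var 0))) (.box 0 (.box 1 (.var 0)))

/-- Right commutativity axiom `□0□1 p → □1□0 p`. -/
def rcomAx : BForm := .imp (.box 0 (.box 1 (.var 0))) (.box 1 (.box 0 (.var 0)))

/-- Confluence axiom `◇0□1 p → □1◇0 p`. -/
def confAx : BForm := .imp (.dia 0 (.box 1 (.var 0))) (.box 1 (.dia 0 (.var 0)))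

/-- The commutator `[L0, L1]`: the smallest normal bimodal logic containing the fusion
together with the two commutativity axioms and the confluence axiom. -/
def Commutator (L0 L1 : Set UForm) : Set BForm :=
  SmallestLogic ((UForm.embed 0 '' L0) ∪ (UForm.embed 1 '' L1) ∪ {lcomAx, rcomAx, confAx})

/-- `[L0, L1]^lcom`: the smallest normal bimodal logic containing the fusion together
with the left commutativity axiom only. -/
def CommutatorLcom (L0 L1 : Set UForm) : Set BForm :=
  SmallestLogic ((UForm.embed 0 '' L0) ∪ (UForm.embed 1 '' L1) ∪ {lcomAx})

/-- A normal bimodal logic has the finite model property if every bimodal formula not in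
`L` fails at some point of a model based on a finite frame for `L`. -/
def HasFMP (L : Set BForm) : Prop :=
  ∀ φ, φ ∉ L → ∃ F : Frame2, Finite F.W ∧ FrameFor F L ∧ ∃ V w, ¬ BTruth F V w φ

/-! ### Products -/

/-- The product of two unimodal frames. -/
def prodFrame (F0 F1 : Frame1) : Frame2 where
  W := F0.W × F1.W
  ne := F0.ne.elim fun a => F1.ne.elim fun b => ⟨(a, b)⟩
  R := fun i a b =>
    if i = 0 then F0.R a.1 b.1 ∧ a.2 = b.2 else F1.R a.2 b.2 ∧ a.1 = b.1

/-- The product logic `L0 × L1` of two (Kripke complete) unimodal logics: the set of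
bimodal formulas valid in every product of a frame for `L0` with a frame for `L1`. -/
def ProdLogic (L0 L1 : Set UForm) : Set BForm :=
  { φ | ∀ F0 F1 : Frame1, UFrameFor F0 L0 → UFrameFor F1 L1 →
      BValid (prodFrame F0 F1) φ }

/-! ### Relation properties and particular unimodal logics -/

/-- Weak connectedness. -/
def WeaklyConnected {W : Type*} (R : W → W → Prop) : Prop :=
  ∀ x y z, R x y → R x z → y = z ∨ R y z ∨ R z y

/-- Pseudo-transitivity. -/
def PseudoTransitive {W : Type*} (R : W → W → Prop) : Prop :=
  ∀ x y z, R x y → R y z → x = z ∨ R x z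

/-- `K`: the unimodal logic determined by all frames. -/
def LogicK : Set UForm := ULog Set.univ

/-- `K3`: the unimodal logic determined by all weakly connected frames. -/
def LogicK3 : Set UForm := ULog { F | WeaklyConnected F.R }

/-- `K4.3`: the unimodal logic determined by all transitive weakly connected frames. -/
def LogicK43 : Set UForm := ULog { F | Transitive F.R ∧ WeaklyConnected F.R }

/-- `S4.3`: the logic determined by all reflexive transitive weakly connected frames. -/
def LogicS43 : Set UForm :=
  ULog { F | Reflexive F.R ∧ Transitive F.R ∧ WeaklyConnected F.R }

/-- `S5`: the unimodal logic determined by all equivalence frames. -/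
def LogicS5 : Set UForm := ULog { F | Equivalence F.R }

/-- `Diff`: the unimodal logic determined by all difference frames `(W, ≠)`. -/
def LogicDiff : Set UForm := ULog { F | ∀ a b, F.R a b ↔ a ≠ b }

/-- `K4⁻`: the unimodal logic determined by all pseudo-transitive frames. -/
def LogicK4minus : Set UForm := ULog { F | PseudoTransitive F.R }

/-- The frame `(ω + 1, >)` on `{0, 1, 2, …, ω}`. -/
def omegaSuccGt : Frame1 := ⟨WithTop ℕ, ⟨⊤⟩, fun a b => b < a⟩

/-- The difference frame `(ω, ≠)`. -/
def omegaNeq : Frame1 := ⟨ℕ, ⟨0⟩, fun a b => a ≠ b⟩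

/-- The frame `(ω, <)`. -/
def omegaLt : Frame1 := ⟨ℕ, ⟨0⟩, fun a b => a < b⟩

/-- The frame `(ω, ≤)`. -/
def omegaLe : Frame1 := ⟨ℕ, ⟨0⟩, fun a b => a ≤ b⟩

/-- The frame `(ℚ, <)`. -/
def ratLt : Frame1 := ⟨ℚ, ⟨0⟩, fun a b => a < b⟩

/-- A unimodal frame is one-step rooted if some point sees every other point in one step. -/
def OneStepRooted (F : Frame1) : Prop := ∃ r : F.W, ∀ w : F.W, w ≠ r → F.R r w

/-- `F` contains an `(ω + 1, >)`-type chain: there are distinct points `x n` for `n ≤ ω`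
such that for `n ≠ m`, `x n` is related to `x m` iff `n > m`. -/
def ContainsOmegaSuccChain (F : Frame1) : Prop :=
  ∃ x : WithTop ℕ → F.W, Function.Injective x ∧
    ∀ n m : WithTop ℕ, n ≠ m → (F.R (x n) (x m) ↔ m < n)

/-- (lcom) for a 2-frame. -/
def Lcom (F : Frame2) : Prop :=
  ∀ x y z : F.W, F.R 0 x y → F.R 1 y z → ∃ u, F.R 1 x u ∧ F.R 0 u z

/-- (rcom) for a 2-frame. -/
def Rcom (F : Frame2) : Prop :=
  ∀ x y z : F.W, F.R 1 x y → F.R 0 y z → ∃ u, F.R 0 x u ∧ F.R 1 u z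

/-- (conf) for a 2-frame. -/
def Conf (F : Frame2) : Prop :=
  ∀ x y z : F.W, F.R 1 x y → F.R 0 x z → ∃ u, F.R 0 y u ∧ F.R 1 z u

/-! ### The tick trick -/

/-- The fixed propositional variable `t`. -/
def tV : BForm := .var 1

/-- The tick-relation `R̄0^M`: `x R̄0^M y` iff there is `z` with `x R0 z`, the truth value
of `t` flips from `x` to `z`, and `z = y` or `z R0 y`. -/
def tickRel (F : Frame2) (V : ℕ → F.W → Prop) (x y : F.W) : Prop :=
  ∃ z, F.R 0 x z ∧ (BTruth F V x tV ↔ ¬ BTruth F V z tV) ∧ (z = y ∨ F.R 0 z y)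

/-- The defined diamond
`◆0ψ = [t → ◇0(¬t ∧ (ψ ∨ ◇0ψ))] ∧ [¬t → ◇0(t ∧ (ψ ∨ ◇0ψ))]`. -/
def blackDia (ψ : BForm) : BForm :=
  .and (.imp tV (.dia 0 (.and (.neg tV) (.or ψ (.dia 0 ψ)))))
    (.imp (.neg tV) (.dia 0 (.and tV (.or ψ (.dia 0 ψ)))))

/-- The defined box `■0ψ = ¬◆0¬ψ`. -/
def blackBox (ψ : BForm) : BForm := .neg (blackDia (.neg ψ))

/-- The tick axiom `(t ∨ ◇1 t → t ∧ □1 t) ∧ □0(t ∨ ◇1 t → t ∧ □1 t)`. -/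
def tickAx : BForm :=
  .and (.imp (.or tV (.dia 1 tV)) (.and tV (.box 1 tV)))
    (.box 0 (.imp (.or tV (.dia 1 tV)) (.and tV (.box 1 tV))))

/-! The tick axiom at `r` makes `t` constant along `R1`-steps out of `r` and out of its
`R0`-successors. So when (lcom), (rcom) or (conf) moves an `R0`-step across `R1`-steps from
such points, both ends keep their `t`-values and the flip of `t` along the step survives.
The remaining `R0`-steps of a tick are carried along by the same property, applied to the
reflexive closure of `R0`. -/

section Semantics

variable {F : Frame2} {V : ℕ → F.W → Prop} {w : F.W}

@[simp] theorem bTruth_and (φ ψ : BForm) :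
    BTruth F V w (.and φ ψ) ↔ BTruth F V w φ ∧ BTruth F V w ψ := by
  simp only [BForm.and, BForm.neg, BTruth]
  tauto

@[simp] theorem bTruth_or (φ ψ : BForm) :
    BTruth F V w (.or φ ψ) ↔ BTruth F V w φ ∨ BTruth F V w ψ := by
  simp only [BForm.or, BForm.neg, BTruth]
  tauto

@[simp] theorem bTruth_dia (i : Fin 2) (φ : BForm) :
    BTruth F V w (.dia i φ) ↔ ∃ v, F.R i w v ∧ BTruth F V v φ := by
  simp [BForm.dia, BForm.neg, BTruth]

theorem bTruth_tV_iff_of_R1 {v : F.W}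
    (h : BTruth F V w (.imp (.or tV (.dia 1 tV)) (.and tV (.box 1 tV)))) (hv : F.R 1 w v) :
    BTruth F V w tV ↔ BTruth F V v tV := by
  simp only [BTruth, bTruth_or, bTruth_and, bTruth_dia] at h
  exact ⟨fun htw => (h (.inl htw)).2 v hv, fun htv => (h (.inr ⟨v, hv, htv⟩)).1⟩

theorem bTruth_tV_iff_of_tickAx {r v : F.W} (htick : BTruth F V r tickAx)
    (hw : w = r ∨ F.R 0 r w) (hv : F.R 1 w v) : BTruth F V w tV ↔ BTruth F V v tV := by
  rw [tickAx, bTruth_and] at htick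
  rcases hw with rfl | hrw
  · exact bTruth_tV_iff_of_R1 htick.1 hv
  · exact bTruth_tV_iff_of_R1 (htick.2 w hrw) hv

end Semantics

section ReflexiveClosure

variable {F : Frame2} {x y z : F.W}

theorem Lcom.exists_reflGen (hl : Lcom F) (hxy : x = y ∨ F.R 0 x y) (hyz : F.R 1 y z) :
    ∃ u, F.R 1 x u ∧ (u = z ∨ F.R 0 u z) := by
  rcases hxy with rfl | hxy
  · exact ⟨z, hyz, .inl rfl⟩
  · obtain ⟨u, hxu, huz⟩ := hl x y z hxy hyz
    exact ⟨u, hxu, .inr huz⟩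

theorem Rcom.exists_reflGen (hr : Rcom F) (hxy : F.R 1 x y) (hyz : y = z ∨ F.R 0 y z) :
    ∃ u, (x = u ∨ F.R 0 x u) ∧ F.R 1 u z := by
  rcases hyz with rfl | hyz
  · exact ⟨x, .inl rfl, hxy⟩
  · obtain ⟨u, hxu, huz⟩ := hr x y z hxy hyz
    exact ⟨u, .inr hxu, huz⟩

theorem Conf.exists_reflGen (hc : Conf F) (hxy : F.R 1 x y) (hxz : x = z ∨ F.R 0 x z) :
    ∃ u, (y = u ∨ F.R 0 y u) ∧ F.R 1 z u := by
  rcases hxz with rfl | hxz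
  · exact ⟨y, .inl rfl, hxy⟩
  · obtain ⟨u, hyu, hzu⟩ := hc x y z hxy hxz
    exact ⟨u, .inr hyu, hzu⟩

end ReflexiveClosure

section TickRel

variable {F : Frame2} {V : ℕ → F.W → Prop} {r x y z : F.W}

theorem tickRel_of_lcom (htick : BTruth F V r tickAx) (hl : Lcom F)
    (hry : tickRel F V r y) (hyz : F.R 1 y z) : ∃ u, F.R 1 r u ∧ tickRel F V u z := by
  obtain ⟨w, hrw, hflip, hwy⟩ := hry
  obtain ⟨v, hwv, hvz⟩ := hl.exists_reflGen hwy hyz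
  obtain ⟨u, hru, huv⟩ := hl r w v hrw hwv
  have hu := bTruth_tV_iff_of_tickAx htick (.inl rfl) hru
  have hv := bTruth_tV_iff_of_tickAx htick (.inr hrw) hwv
  exact ⟨u, hru, v, huv, by rwa [← hu, ← hv], hvz⟩

theorem tickRel_of_rcom (ht : Transitive (F.R 0)) (htick : BTruth F V r tickAx) (hr : Rcom F)
    (hx : x = r ∨ F.R 0 r x) (hxy : F.R 1 x y) (hyz : tickRel F V y z) :
    ∃ u, tickRel F V x u ∧ F.R 1 u z := by
  obtain ⟨w, hyw, hflip, hwz⟩ := hyz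
  obtain ⟨v, hxv, hvw⟩ := hr x y w hxy hyw
  obtain ⟨u, hvu, huz⟩ := hr.exists_reflGen hvw hwz
  have hrv : F.R 0 r v := hx.elim (fun h => h ▸ hxv) (ht · hxv)
  have hy := bTruth_tV_iff_of_tickAx htick hx hxy
  have hv := bTruth_tV_iff_of_tickAx htick (.inr hrv) hvw
  exact ⟨u, ⟨v, hxv, by rwa [hy, hv], hvu⟩, huz⟩

theorem tickRel_of_conf (ht : Transitive (F.R 0)) (htick : BTruth F V r tickAx) (hc : Conf F)
    (hrx : F.R 0 r x) (hxz : tickRel F V x z) (hxy : F.R 1 x y) :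
    ∃ u, tickRel F V y u ∧ F.R 1 z u := by
  obtain ⟨w, hxw, hflip, hwz⟩ := hxz
  obtain ⟨v, hyv, hwv⟩ := hc x y w hxy hxw
  obtain ⟨u, hvu, hzu⟩ := hc.exists_reflGen hwv hwz
  have hy := bTruth_tV_iff_of_tickAx htick (.inr hrx) hxy
  have hv := bTruth_tV_iff_of_tickAx htick (.inr (ht hrx hxw)) hwv
  exact ⟨u, ⟨v, hyv, by rwa [← hy, ← hv], hvu⟩, hzu⟩

end TickRel

/-- **Claim 3.** Suppose `R0` is transitive and the tick axiom holds at `r`. Then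
(lcom), (rcom) and (conf) transfer to the corresponding properties of the
tick-relation, relativised to `r`. -/
theorem tickRel_com_conf (F : Frame2) (V : ℕ → F.W → Prop) (r : F.W)
    (ht : Transitive (F.R 0)) (htick : BTruth F V r tickAx) :
    (Lcom F → ∀ y z, tickRel F V r y → F.R 1 y z →
      ∃ u, F.R 1 r u ∧ tickRel F V u z) ∧
    (Rcom F → ∀ x y z, (x = r ∨ F.R 0 r x) → F.R 1 x y → tickRel F V y z →
      ∃ u, tickRel F V x u ∧ F.R 1 u z) ∧
    (Conf F → ∀ x y z, F.R 0 r x → tickRel F V x z → F.R 1 x y →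
      ∃ u, tickRel F V y u ∧ F.R 1 z u) :=
  ⟨fun hl _ _ => tickRel_of_lcom htick hl,
    fun hr _ _ _ => tickRel_of_rcom ht htick hr,
    fun hc _ _ _ => tickRel_of_conf ht htick hc⟩
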